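/- Let Ω be a probability amplitude on ℝⁿ and M an n×n real symmetric positive definite matrix, diagonalized as M = Oᵀ Λ O with O orthogonal and Λ = diag(λ₁,…,λₙ), λᵢ > 0. Define Tᵢ(q) := √λᵢ Σ_{k} O_{ik} ∂_k ln(Ω(q)²) for i = 1,…,n. Then: (i) ⟨Tᵢ⟩ = 0 for every i; (ii) ⟨Q⟩ = (ħ²/8) Σ_{i=1}^{n} Cov(Tᵢ,Tᵢ); and (iii) for every continuously differentiable T₀ square-integrable with respect to Ω² dq with the decay hypotheses that make integration by parts valid, Σ_{i=1}^{n} Cov(T₀,Tᵢ)² = ⟨∇T₀⟩ · M ⟨∇T₀⟩. -/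

import Mathlib

open MeasureTheory Matrix Filter

/-- Partial derivative `∂ⱼ f` of a function on `ℝⁿ`. -/
noncomputable def pd {n : ℕ} (j : Fin n) (f : (Fin n → ℝ) → ℝ) (q : Fin n → ℝ) : ℝ :=
  fderiv ℝ f q (Pi.single j 1)

/-- Mean value `⟨T⟩ = ∫ Ω² T` with respect to the probability density `Ω²`. -/
noncomputable def expec {n : ℕ} (Ω T : (Fin n → ℝ) → ℝ) : ℝ :=
  ∫ q, (Ω q) ^ 2 * T q

/-- Covariance `Cov(T,T') = ⟨TT'⟩ - ⟨T⟩⟨T'⟩` with respect to `Ω²`. -/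
noncomputable def cov {n : ℕ} (Ω T T' : (Fin n → ℝ) → ℝ) : ℝ :=
  expec Ω (fun q => T q * T' q) - expec Ω T * expec Ω T'

/-- Mean value of the quantum potential `⟨Q⟩ = -(ħ²/2) ∫ Ω Σⱼₖ Mⱼₖ ∂ⱼ∂ₖΩ`. -/
noncomputable def meanQ {n : ℕ} (hbar : ℝ) (M : Matrix (Fin n) (Fin n) ℝ)
    (Ω : (Fin n → ℝ) → ℝ) : ℝ :=
  -(hbar ^ 2 / 2) * ∫ q, Ω q * ∑ j, ∑ k, M j k * pd j (pd k Ω) q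

/-- The auxiliary functions `Tᵢ(q) = √λᵢ Σₖ Oᵢₖ ∂ₖ ln Ω²(q)`. -/
noncomputable def auxT {n : ℕ} (lam : Fin n → ℝ) (O : Matrix (Fin n) (Fin n) ℝ)
    (Ω : (Fin n → ℝ) → ℝ) (i : Fin n) (q : Fin n → ℝ) : ℝ :=
  Real.sqrt (lam i) * ∑ k, O i k * pd k (fun x => Real.log ((Ω x) ^ 2)) q

/-!
Write `s = ∇ ln Ω²` for the score of the density `Ω²` and `B = Λ^{1/2} O`, so that `Tᵢ = (B s)ᵢ`
and `BᵀB = M`. Everything then follows from integration by parts: `⟨sₖ⟩ = ∫ ∂ₖ(Ω²) = 0`,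
`⟨T₀ sₖ⟩ = ∫ T₀ ∂ₖ(Ω²) = -⟨∂ₖT₀⟩`, and `∫ Ω ∂ⱼ∂ₖΩ = -∫ ∂ⱼΩ ∂ₖΩ`, which turns `⟨Q⟩` into
`(ħ²/8) Σⱼₖ Mⱼₖ Iⱼₖ` for the Fisher information `I = ⟨s sᵀ⟩ = 4 ∫ ∇Ω ∇Ωᵀ`. Hence
`Σᵢ Cov(Tᵢ,Tᵢ) = tr (B I Bᵀ) = Σⱼₖ Mⱼₖ Iⱼₖ`, and `Cov(T₀,Tᵢ) = -(B ⟨∇T₀⟩)ᵢ`, whose squares add up to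
`⟨∇T₀⟩ ⬝ M ⟨∇T₀⟩`.
-/

section Linearity

variable {α ι κ : Type*} [MeasurableSpace α] {μ : Measure α} [Fintype ι] [Fintype κ]

theorem integral_sum_const_mul (c : ι → ℝ) {f : ι → α → ℝ} (hf : ∀ j, Integrable (f j) μ) :
    ∫ x, ∑ j, c j * f j x ∂μ = ∑ j, c j * ∫ x, f j x ∂μ := by
  rw [integral_finsetSum _ fun j _ => (hf j).const_mul (c j)]
  simp only [integral_const_mul]

theorem integral_sum_sum_const_mul (c : ι → κ → ℝ) {f : ι → κ → α → ℝ}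
    (hf : ∀ j k, Integrable (f j k) μ) :
    ∫ x, ∑ j, ∑ k, c j k * f j k x ∂μ = ∑ j, ∑ k, c j k * ∫ x, f j k x ∂μ := by
  rw [integral_finsetSum _ fun j _ =>
    integrable_finsetSum _ fun k _ => (hf j k).const_mul (c j k)]
  simp only [integral_sum_const_mul _ (hf _)]

theorem integrable_mul_of_integrable_sq {f g : α → ℝ} (hf : AEStronglyMeasurable f μ)
    (hg : AEStronglyMeasurable g μ) (hf2 : Integrable (fun x => f x ^ 2) μ)
    (hg2 : Integrable (fun x => g x ^ 2) μ) : Integrable (fun x => f x * g x) μ :=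
  ((memLp_two_iff_integrable_sq hf).2 hf2).integrable_mul ((memLp_two_iff_integrable_sq hg).2 hg2)

end Linearity

section MatrixAlgebra

variable {ι κ : Type*} [Fintype ι] [Fintype κ]

theorem sum_sq_mulVec_apply (B : Matrix κ ι ℝ) (v : ι → ℝ) :
    ∑ i, (B *ᵥ v) i ^ 2 = v ⬝ᵥ (Bᵀ * B) *ᵥ v := by
  rw [← mulVec_mulVec, dotProduct_mulVec, vecMul_transpose]
  simp only [dotProduct, sq]

theorem sum_sum_sum_mul_mul_eq_transpose_mul_self (B : Matrix κ ι ℝ) (G : Matrix ι ι ℝ) :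
    ∑ i, ∑ j, ∑ k, B i j * B i k * G j k = ∑ j, ∑ k, (Bᵀ * B) j k * G j k := by
  simp only [mul_apply, transpose_apply, Finset.sum_mul]
  rw [Finset.sum_comm]
  refine Finset.sum_congr rfl fun j _ => Finset.sum_comm

variable [DecidableEq ι]

theorem transpose_mul_self_diagonal_sqrt_mul {lam : ι → ℝ} (hlam : ∀ i, 0 ≤ lam i)
    (O : Matrix ι ι ℝ) :
    (diagonal (fun i => √(lam i)) * O)ᵀ * (diagonal (fun i => √(lam i)) * O) =
      Oᵀ * diagonal lam * O := by
  have hsq : (fun i => √(lam i) * √(lam i)) = lam := funext fun i => Real.mul_self_sqrt (hlam i)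
  rw [transpose_mul, diagonal_transpose, Matrix.mul_assoc, ← Matrix.mul_assoc (diagonal _),
    diagonal_mul_diagonal, hsq, Matrix.mul_assoc]

end MatrixAlgebra

section Calculus

variable {n : ℕ} {f g : (Fin n → ℝ) → ℝ} {q : Fin n → ℝ}

theorem contDiff_pd {m : WithTop ℕ∞} (hf : ContDiff ℝ (m + 1) f) (k : Fin n) :
    ContDiff ℝ m (pd k f) :=
  (hf.fderiv_right le_rfl).clm_apply contDiff_const

theorem pd_mul (hf : DifferentiableAt ℝ f q) (hg : DifferentiableAt ℝ g q) (j : Fin n) :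
    pd j (fun x => f x * g x) q = pd j f q * g q + f q * pd j g q := by
  simp only [pd, fderiv_fun_mul hf hg, _root_.add_apply, _root_.smul_apply, smul_eq_mul]
  ring

theorem pd_sq (hf : DifferentiableAt ℝ f q) (j : Fin n) :
    pd j (fun x => f x ^ 2) q = 2 * f q * pd j f q := by
  simp only [sq, pd_mul hf hf]
  ring

theorem pd_log_sq (hf : DifferentiableAt ℝ f q) (hq : f q ≠ 0) (k : Fin n) :
    pd k (fun x => Real.log (f x ^ 2)) q = 2 * pd k f q / f q := by
  simp only [pd, ((hf.hasFDerivAt.pow 2).log (pow_ne_zero 2 hq)).fderiv, _root_.smul_apply,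
    smul_eq_mul]
  field_simp
  ring

theorem integral_mul_pd_eq_neg (hf : Differentiable ℝ f) (hg : Differentiable ℝ g) (j : Fin n)
    (hfg : Integrable fun q => f q * pd j g q) (hfg' : Integrable fun q => pd j f q * g q)
    (hbd : ∫ q, pd j (fun x => f x * g x) q = 0) :
    ∫ q, f q * pd j g q = -∫ q, pd j f q * g q := by
  simp only [pd_mul (hf _) (hg _), integral_add hfg' hfg] at hbd
  linarith

end Calculus

section Score

variable {n : ℕ}

noncomputable def score (Ω : (Fin n → ℝ) → ℝ) (q : Fin n → ℝ) : Fin n → ℝ :=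
  fun k => pd k (fun x => Real.log (Ω x ^ 2)) q

-- The Fisher information `∫ Ω² ∂ⱼ ln Ω² ∂ₖ ln Ω²` of the density `Ω²`, in terms of `Ω`.
noncomputable def fisherInfo (Ω : (Fin n → ℝ) → ℝ) : Matrix (Fin n) (Fin n) ℝ :=
  of fun j k => 4 * ∫ q, pd j Ω q * pd k Ω q

variable {Ω : (Fin n → ℝ) → ℝ}

theorem auxT_eq_mulVec_score (lam : Fin n → ℝ) (O : Matrix (Fin n) (Fin n) ℝ) (i : Fin n)
    (q : Fin n → ℝ) :
    auxT lam O Ω i q = ((diagonal (fun i => √(lam i)) * O) *ᵥ score Ω q) i := by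
  rw [← mulVec_mulVec, mulVec_diagonal]
  rfl

theorem sq_mul_score {q : Fin n → ℝ} (hΩ : DifferentiableAt ℝ Ω q) (hq : Ω q ≠ 0) (k : Fin n) :
    Ω q ^ 2 * score Ω q k = pd k (fun x => Ω x ^ 2) q := by
  rw [score, pd_log_sq hΩ hq, pd_sq hΩ]
  field_simp

theorem sq_mul_score_mul_score {q : Fin n → ℝ} (hΩ : DifferentiableAt ℝ Ω q) (hq : Ω q ≠ 0)
    (j k : Fin n) :
    Ω q ^ 2 * (score Ω q j * score Ω q k) = 4 * (pd j Ω q * pd k Ω q) := by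
  rw [score, score, pd_log_sq hΩ hq, pd_log_sq hΩ hq]
  field_simp
  ring

theorem expec_mulVec_apply {κ : Type*} (A : Matrix κ (Fin n) ℝ) {f : (Fin n → ℝ) → Fin n → ℝ}
    (hf : ∀ j, Integrable fun q => Ω q ^ 2 * f q j) (i : κ) :
    expec Ω (fun q => (A *ᵥ f q) i) = (A *ᵥ fun j => expec Ω fun q => f q j) i := by
  simp only [expec, mulVec, dotProduct, Finset.mul_sum, mul_left_comm (Ω _ ^ 2)]
  exact integral_sum_const_mul _ hf

end Score

section IntegrationByParts

variable {n : ℕ} {Ω : (Fin n → ℝ) → ℝ}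

theorem expec_score_eq_zero (hΩ : Differentiable ℝ Ω) (hpos : ∀ q, 0 < Ω q) (k : Fin n)
    (hbd : ∫ q, pd k (fun x => Ω x ^ 2) q = 0) : expec Ω (fun q => score Ω q k) = 0 := by
  simpa only [expec, sq_mul_score (hΩ _) (hpos _).ne'] using hbd

theorem integral_mul_pd_pd_eq_neg (hΩ : ContDiff ℝ 2 Ω) (j k : Fin n)
    (hint : Integrable fun q => Ω q * pd j (pd k Ω) q)
    (hint' : Integrable fun q => pd j Ω q * pd k Ω q)
    (hbd : ∫ q, pd j (fun x => Ω x * pd k Ω x) q = 0) :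
    ∫ q, Ω q * pd j (pd k Ω) q = -∫ q, pd j Ω q * pd k Ω q :=
  integral_mul_pd_eq_neg (hΩ.differentiable (by norm_num))
    ((contDiff_pd (m := 1) hΩ k).differentiable one_ne_zero) j hint hint' hbd

theorem integrable_mul_pd_sq (hΩ : ContDiff ℝ 2 Ω) {T₀ : (Fin n → ℝ) → ℝ} (hT₀ : Continuous T₀)
    (k : Fin n) (hT₀sq : Integrable fun q => Ω q ^ 2 * T₀ q ^ 2)
    (hΩk : Integrable fun q => pd k Ω q * pd k Ω q) :
    Integrable fun q => T₀ q * pd k (fun x => Ω x ^ 2) q := by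
  have hpd : ∀ q, T₀ q * pd k (fun x => Ω x ^ 2) q = 2 * ((Ω q * T₀ q) * pd k Ω q) := by
    intro q
    rw [pd_sq ((hΩ.differentiable (by norm_num)) q)]
    ring
  simp only [hpd]
  refine (integrable_mul_of_integrable_sq ?_ ?_ ?_ ?_).const_mul 2
  · exact (hΩ.continuous.mul hT₀).aestronglyMeasurable
  · exact (contDiff_pd (m := 1) hΩ k).continuous.aestronglyMeasurable
  · simpa only [mul_pow] using hT₀sq
  · simpa only [sq] using hΩk

theorem expec_mul_score (hΩ : Differentiable ℝ Ω) (hpos : ∀ q, 0 < Ω q)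
    {T₀ : (Fin n → ℝ) → ℝ} (hT₀ : Differentiable ℝ T₀) (k : Fin n)
    (hint : Integrable fun q => T₀ q * pd k (fun x => Ω x ^ 2) q)
    (hT₀k : Integrable fun q => Ω q ^ 2 * pd k T₀ q)
    (hbd : ∫ q, pd k (fun x => T₀ x * Ω x ^ 2) q = 0) :
    expec Ω (fun q => T₀ q * score Ω q k) = -expec Ω (pd k T₀) := by
  simp only [expec, mul_left_comm (Ω _ ^ 2), sq_mul_score (hΩ _) (hpos _).ne']
  rw [integral_mul_pd_eq_neg (g := fun x => Ω x ^ 2) hT₀ (fun x => (hΩ x).pow 2) k hint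
    (by simpa only [mul_comm] using hT₀k) hbd]
  simp only [mul_comm]

end IntegrationByParts

section AuxiliaryFunctions

variable {n : ℕ} {Ω : (Fin n → ℝ) → ℝ} (lam : Fin n → ℝ) (O : Matrix (Fin n) (Fin n) ℝ)

theorem expec_auxT_eq_zero (hΩ : Differentiable ℝ Ω) (hpos : ∀ q, 0 < Ω q)
    (hint : ∀ k, Integrable fun q => Ω q ^ 2 * score Ω q k)
    (hbd : ∀ k, ∫ q, pd k (fun x => Ω x ^ 2) q = 0) (i : Fin n) :
    expec Ω (auxT lam O Ω i) = 0 := by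
  rw [show auxT lam O Ω i = _ from funext (auxT_eq_mulVec_score lam O i),
    expec_mulVec_apply _ hint]
  simp only [expec_score_eq_zero hΩ hpos _ (hbd _)]
  exact congrFun (mulVec_zero _) i

theorem expec_auxT_mul_self (hΩ : Differentiable ℝ Ω) (hpos : ∀ q, 0 < Ω q)
    (hint : ∀ j k, Integrable fun q => Ω q ^ 2 * (score Ω q j * score Ω q k)) (i : Fin n) :
    expec Ω (fun q => auxT lam O Ω i q * auxT lam O Ω i q) =
      ∑ j, ∑ k, (diagonal (fun i => √(lam i)) * O) i j * (diagonal (fun i => √(lam i)) * O) i k *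
        fisherInfo Ω j k := by
  set B := diagonal (fun i => √(lam i)) * O
  have hexpand : ∀ q, Ω q ^ 2 * (auxT lam O Ω i q * auxT lam O Ω i q) =
      ∑ j, ∑ k, B i j * B i k * (Ω q ^ 2 * (score Ω q j * score Ω q k)) := by
    intro q
    rw [auxT_eq_mulVec_score lam O i]
    simp only [mulVec, dotProduct]
    rw [Finset.sum_mul_sum, Finset.mul_sum]
    refine Finset.sum_congr rfl fun j _ => ?_
    rw [Finset.mul_sum]
    exact Finset.sum_congr rfl fun k _ => by ring
  simp only [expec, hexpand]
  rw [integral_sum_sum_const_mul _ hint]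
  simp only [sq_mul_score_mul_score (hΩ _) (hpos _).ne', integral_const_mul, fisherInfo, of_apply]

theorem cov_auxT_eq_mulVec (hΩ : ContDiff ℝ 2 Ω) (hpos : ∀ q, 0 < Ω q)
    (hint : ∀ k, Integrable fun q => Ω q ^ 2 * score Ω q k)
    (hΩk : ∀ k, Integrable fun q => pd k Ω q * pd k Ω q)
    (hbd : ∀ k, ∫ q, pd k (fun x => Ω x ^ 2) q = 0)
    {T₀ : (Fin n → ℝ) → ℝ} (hT₀ : ContDiff ℝ 1 T₀)
    (hT₀sq : Integrable fun q => Ω q ^ 2 * T₀ q ^ 2)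
    (hT₀k : ∀ k, Integrable fun q => Ω q ^ 2 * pd k T₀ q)
    (hT₀bd : ∀ k, ∫ q, pd k (fun x => T₀ x * Ω x ^ 2) q = 0) (i : Fin n) :
    cov Ω T₀ (auxT lam O Ω i) =
      ((diagonal (fun i => √(lam i)) * O) *ᵥ -fun k => expec Ω (pd k T₀)) i := by
  have hΩd : Differentiable ℝ Ω := hΩ.differentiable (by norm_num)
  have hint' : ∀ k, Integrable fun q => Ω q ^ 2 * (T₀ q • score Ω q) k := by
    intro k
    simp only [Pi.smul_apply, smul_eq_mul, mul_left_comm (Ω _ ^ 2),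
      sq_mul_score (hΩd _) (hpos _).ne']
    exact integrable_mul_pd_sq hΩ hT₀.continuous k hT₀sq (hΩk k)
  rw [cov, expec_auxT_eq_zero lam O hΩd hpos hint hbd, mul_zero, sub_zero]
  have hpt : ∀ q, T₀ q * auxT lam O Ω i q =
      ((diagonal (fun i => √(lam i)) * O) *ᵥ (T₀ q • score Ω q)) i := by
    intro q
    rw [mulVec_smul, Pi.smul_apply, smul_eq_mul, auxT_eq_mulVec_score]
  simp only [hpt]
  rw [expec_mulVec_apply _ hint']
  congr 2
  funext k
  exact expec_mul_score hΩd hpos (hT₀.differentiable one_ne_zero) k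
    (integrable_mul_pd_sq hΩ hT₀.continuous k hT₀sq (hΩk k)) (hT₀k k) (hT₀bd k)

end AuxiliaryFunctions

theorem meanQ_eq_fisherInfo {n : ℕ} {Ω : (Fin n → ℝ) → ℝ} (hΩ : ContDiff ℝ 2 Ω) (hbar : ℝ)
    (M : Matrix (Fin n) (Fin n) ℝ)
    (hint : ∀ j k, Integrable fun q => Ω q * pd j (pd k Ω) q)
    (hint' : ∀ j k, Integrable fun q => pd j Ω q * pd k Ω q)
    (hbd : ∀ j k, ∫ q, pd j (fun x => Ω x * pd k Ω x) q = 0) :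
    meanQ hbar M Ω = hbar ^ 2 / 8 * ∑ j, ∑ k, M j k * fisherInfo Ω j k := by
  have hexpand : ∀ q, Ω q * ∑ j, ∑ k, M j k * pd j (pd k Ω) q =
      ∑ j, ∑ k, M j k * (Ω q * pd j (pd k Ω) q) := by
    intro q
    simp only [Finset.mul_sum, mul_left_comm (Ω q)]
  simp only [meanQ, hexpand]
  rw [integral_sum_sum_const_mul M hint]
  simp only [integral_mul_pd_pd_eq_neg hΩ _ _ (hint _ _) (hint' _ _) (hbd _ _), mul_neg,
    Finset.sum_neg_distrib, fisherInfo, of_apply, mul_left_comm _ (4 : ℝ),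
    ← Finset.mul_sum]
  ring

theorem auxT_properties_general {n : ℕ} (hbar : ℝ)
    (Ω : (Fin n → ℝ) → ℝ) (hΩc : ContDiff ℝ 2 Ω) (hΩpos : ∀ q, 0 < Ω q)
    (M : Matrix (Fin n) (Fin n) ℝ)
    (O : Matrix (Fin n) (Fin n) ℝ)
    (lam : Fin n → ℝ) (hlam : ∀ i, 0 < lam i)
    (hdiag : M = Oᵀ * Matrix.diagonal lam * O)
    -- all integrals appearing converge absolutely
    (hint1 : ∀ j k, Integrable (fun q => Ω q * pd j (pd k Ω) q))
    (hint2 : ∀ j k, Integrable (fun q => pd j Ω q * pd k Ω q))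
    (hint3 : ∀ k, Integrable (fun q => (Ω q) ^ 2 * pd k (fun x => Real.log ((Ω x) ^ 2)) q))
    (hint4 : ∀ j k, Integrable (fun q => (Ω q) ^ 2 *
      (pd j (fun x => Real.log ((Ω x) ^ 2)) q * pd k (fun x => Real.log ((Ω x) ^ 2)) q)))
    -- all boundary terms in integration by parts vanish
    (hbd1 : ∀ j k, ∫ q, pd j (fun x => Ω x * pd k Ω x) q = 0)
    (hbd2 : ∀ k, ∫ q, pd k (fun x => (Ω x) ^ 2) q = 0) :
    (∀ i, expec Ω (auxT lam O Ω i) = 0) ∧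
    meanQ hbar M Ω = hbar ^ 2 / 8 * ∑ i, cov Ω (auxT lam O Ω i) (auxT lam O Ω i) ∧
    (∀ T₀ : (Fin n → ℝ) → ℝ, ContDiff ℝ 1 T₀ →
      Integrable (fun q => (Ω q) ^ 2 * (T₀ q) ^ 2) →
      Integrable (fun q => (Ω q) ^ 2 * T₀ q) →
      (∀ k, Integrable (fun q => (Ω q) ^ 2 * pd k T₀ q)) →
      Tendsto (fun q => T₀ q * (Ω q) ^ 2) (cocompact (Fin n → ℝ)) (nhds 0) →
      (∀ k, ∫ q, pd k (fun x => T₀ x * (Ω x) ^ 2) q = 0) →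
      ∑ i, (cov Ω T₀ (auxT lam O Ω i)) ^ 2 =
        (fun k => expec Ω (pd k T₀)) ⬝ᵥ M.mulVec (fun k => expec Ω (pd k T₀))) := by
  have hΩd : Differentiable ℝ Ω := hΩc.differentiable (by norm_num)
  have hB : (diagonal (fun i => √(lam i)) * O)ᵀ * (diagonal (fun i => √(lam i)) * O) = M := by
    rw [hdiag, transpose_mul_self_diagonal_sqrt_mul fun i => (hlam i).le]
  have hmean := expec_auxT_eq_zero lam O hΩd hΩpos hint3 hbd2
  refine ⟨hmean, ?_, ?_⟩
  · simp only [cov, hmean, mul_zero, sub_zero, expec_auxT_mul_self lam O hΩd hΩpos hint4]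
    rw [sum_sum_sum_mul_mul_eq_transpose_mul_self, hB,
      meanQ_eq_fisherInfo hΩc hbar M hint1 hint2 hbd1]
  · intro T₀ hT₀ hT₀sq _ hT₀k _ hT₀bd
    simp only [cov_auxT_eq_mulVec lam O hΩc hΩpos hint3 (fun k => hint2 k k) hbd2 hT₀ hT₀sq hT₀k
      hT₀bd]
    rw [sum_sq_mulVec_apply, hB, mulVec_neg, dotProduct_neg, neg_dotProduct, neg_neg]

/-- properties of the auxiliary functions `Tᵢ`:
`⟨Tᵢ⟩ = 0`, `⟨Q⟩ = (ħ²/8) Σᵢ Cov(Tᵢ,Tᵢ)`, and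
`Σᵢ Cov(T₀,Tᵢ)² = ⟨∇T₀⟩ ⋅ M ⟨∇T₀⟩` for suitable `T₀`. -/
theorem auxT_properties {n : ℕ} (hn : 1 ≤ n) (hbar : ℝ) (hhbar : 0 < hbar)
    (Ω : (Fin n → ℝ) → ℝ) (hΩc : ContDiff ℝ 2 Ω) (hΩpos : ∀ q, 0 < Ω q)
    (hΩnorm : ∫ q, (Ω q) ^ 2 = 1)
    (M : Matrix (Fin n) (Fin n) ℝ) (hM : M.PosDef)
    (O : Matrix (Fin n) (Fin n) ℝ) (hO : Oᵀ * O = 1) (hO' : O * Oᵀ = 1)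
    (lam : Fin n → ℝ) (hlam : ∀ i, 0 < lam i)
    (hdiag : M = Oᵀ * Matrix.diagonal lam * O)
    -- all integrals appearing converge absolutely
    (hint1 : ∀ j k, Integrable (fun q => Ω q * pd j (pd k Ω) q))
    (hint2 : ∀ j k, Integrable (fun q => pd j Ω q * pd k Ω q))
    (hint3 : ∀ k, Integrable (fun q => (Ω q) ^ 2 * pd k (fun x => Real.log ((Ω x) ^ 2)) q))
    (hint4 : ∀ j k, Integrable (fun q => (Ω q) ^ 2 *
      (pd j (fun x => Real.log ((Ω x) ^ 2)) q * pd k (fun x => Real.log ((Ω x) ^ 2)) q)))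
    -- all boundary terms in integration by parts vanish
    (hbd1 : ∀ j k, ∫ q, pd j (fun x => Ω x * pd k Ω x) q = 0)
    (hbd2 : ∀ k, ∫ q, pd k (fun x => (Ω x) ^ 2) q = 0) :
    (∀ i, expec Ω (auxT lam O Ω i) = 0) ∧
    meanQ hbar M Ω = hbar ^ 2 / 8 * ∑ i, cov Ω (auxT lam O Ω i) (auxT lam O Ω i) ∧
    (∀ T₀ : (Fin n → ℝ) → ℝ, ContDiff ℝ 1 T₀ →
      Integrable (fun q => (Ω q) ^ 2 * (T₀ q) ^ 2) →
      Integrable (fun q => (Ω q) ^ 2 * T₀ q) →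
      (∀ k, Integrable (fun q => (Ω q) ^ 2 * pd k T₀ q)) →
      Tendsto (fun q => T₀ q * (Ω q) ^ 2) (cocompact (Fin n → ℝ)) (nhds 0) →
      (∀ k, ∫ q, pd k (fun x => T₀ x * (Ω x) ^ 2) q = 0) →
      ∑ i, (cov Ω T₀ (auxT lam O Ω i)) ^ 2 =
        (fun k => expec Ω (pd k T₀)) ⬝ᵥ M.mulVec (fun k => expec Ω (pd k T₀))) :=
  auxT_properties_general hbar Ω hΩc hΩpos M O lam hlam hdiag hint1 hint2 hint3 hint4 hbd1 hbd2
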